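/- arXiv:2103.01734 — 2 statements merged into one kernel-verified Lean document; each statement's English description precedes it below -/
import Mathlib

section
/- □-primality of IEL⁻: for all formulas A and B, if ⊢ □A ∨ □B in 𝕀EL⁻, then ⊢ A or ⊢ B. -/
namespace IEL

/-- Formulas of intuitionistic epistemic logic: atoms, `⊥`, `⊤`, `∧`, `∨`, `→`, `□`. -/
inductive Formula : Type where
  | atom : ℕ → Formula
  | bot : Formula
  | top : Formula
  | and : Formula → Formula → Formula
  | or : Formula → Formula → Formula
  | imp : Formula → Formula → Formula
  | box : Formula → Formula

/-- The Hilbert system `𝕀EL⁻`: axiom schemes of intuitionistic propositional logic,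
the scheme `K`, co-reflection `A → □A`, and modus ponens as the only inference rule. -/
inductive Hilbert : Set Formula → Formula → Prop where
  | hyp {Γ A} : A ∈ Γ → Hilbert Γ A
  | imp1 {Γ A B} : Hilbert Γ (.imp A (.imp B A))
  | imp2 {Γ A B C} :
      Hilbert Γ (.imp (.imp A (.imp B C)) (.imp (.imp A B) (.imp A C)))
  | andI {Γ A B} : Hilbert Γ (.imp A (.imp B (.and A B)))
  | andE1 {Γ A B} : Hilbert Γ (.imp (.and A B) A)
  | andE2 {Γ A B} : Hilbert Γ (.imp (.and A B) B)
  | orI1 {Γ A B} : Hilbert Γ (.imp A (.or A B))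
  | orI2 {Γ A B} : Hilbert Γ (.imp B (.or A B))
  | orE {Γ A B C} :
      Hilbert Γ (.imp (.imp A C) (.imp (.imp B C) (.imp (.or A B) C)))
  | exfalso {Γ A} : Hilbert Γ (.imp .bot A)
  | top {Γ} : Hilbert Γ .top
  | k {Γ A B} : Hilbert Γ (.imp (.box (.imp A B)) (.imp (.box A) (.box B)))
  | coreflection {Γ A} : Hilbert Γ (.imp A (.box A))
  | mp {Γ A B} : Hilbert Γ (.imp A B) → Hilbert Γ A → Hilbert Γ B

/-- `⊢ A` : derivability in `𝕀EL⁻` from the empty set of hypotheses. -/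
def Prov (A : Formula) : Prop := Hilbert ∅ A

/-- Kleene slash for `𝕀EL⁻`. -/
def Slash : Formula → Prop
  | .atom n => Prov (.atom n)
  | .bot => False
  | .top => True
  | .and A B => Slash A ∧ Slash B
  | .or A B => Slash A ∨ Slash B
  | .imp A B => Prov (.imp A B) ∧ (Slash A → Slash B)
  | .box A => Prov A

lemma slash_prov : ∀ A, Slash A → Prov A := by
  intro A
  induction A with
  | atom n => exact fun h => h
  | bot => exact fun h => h.elim
  | top => exact fun _ => Hilbert.top
  | and A B ihA ihB =>
      intro h
      exact Hilbert.mp (Hilbert.mp Hilbert.andI (ihA h.1)) (ihB h.2)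
  | or A B ihA ihB =>
      intro h
      rcases h with h | h
      · exact Hilbert.mp Hilbert.orI1 (ihA h)
      · exact Hilbert.mp Hilbert.orI2 (ihB h)
  | imp A B ihA ihB => exact fun h => h.1
  | box A ih => exact fun h => Hilbert.mp Hilbert.coreflection h

lemma prov_slash {A : Formula} (h : Prov A) : Slash A := by
  induction h with
  | hyp hm => exact absurd hm (Set.notMem_empty _)
  | @imp1 A B =>
      exact ⟨Hilbert.imp1, fun hA =>
        ⟨Hilbert.mp Hilbert.imp1 (slash_prov A hA), fun _ => hA⟩⟩
  | @imp2 A B C =>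
      refine ⟨Hilbert.imp2, fun h1 => ⟨Hilbert.mp Hilbert.imp2 h1.1, fun h2 =>
        ⟨Hilbert.mp (Hilbert.mp Hilbert.imp2 h1.1) h2.1, fun hA =>
          (h1.2 hA).2 (h2.2 hA)⟩⟩⟩
  | @andI A B =>
      exact ⟨Hilbert.andI, fun hA =>
        ⟨Hilbert.mp Hilbert.andI (slash_prov A hA), fun hB => ⟨hA, hB⟩⟩⟩
  | andE1 => exact ⟨Hilbert.andE1, fun h => h.1⟩
  | andE2 => exact ⟨Hilbert.andE2, fun h => h.2⟩
  | orI1 => exact ⟨Hilbert.orI1, fun h => Or.inl h⟩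
  | orI2 => exact ⟨Hilbert.orI2, fun h => Or.inr h⟩
  | @orE A B C =>
      refine ⟨Hilbert.orE, fun h1 => ⟨Hilbert.mp Hilbert.orE h1.1, fun h2 =>
        ⟨Hilbert.mp (Hilbert.mp Hilbert.orE h1.1) h2.1, fun hAB => ?_⟩⟩⟩
      rcases hAB with hA | hB
      · exact h1.2 hA
      · exact h2.2 hB
  | exfalso => exact ⟨Hilbert.exfalso, fun h => h.elim⟩
  | top => exact trivial
  | @k A B =>
      refine ⟨Hilbert.k, fun h1 => ?_⟩
      -- here `h1 : Slash (□(A→B))`, i.e. `Prov (A → B)`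
      have hbox : Prov (Formula.box (.imp A B)) :=
        Hilbert.mp Hilbert.coreflection h1
      exact ⟨Hilbert.mp Hilbert.k hbox, fun hA => Hilbert.mp h1 hA⟩
  | @coreflection A =>
      exact ⟨Hilbert.coreflection, fun hA => slash_prov A hA⟩
  | mp h1 h2 ih1 ih2 => exact ih1.2 ih2

/-- **`□`-primality of `IEL⁻`**: if `⊢ □A ∨ □B` then `⊢ A` or `⊢ B`. -/
theorem box_primality :
    ∀ A B : Formula, Prov (.or (.box A) (.box B)) → Prov A ∨ Prov B := by
  intro A B h
  exact prov_slash h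

end IEL
end

section
/- Decrease of the permutation degree under permutation: for all λ^{□→∧∨}-terms t and s, if t >_P s then |t| > |s|. -/
namespace IEL

/-- de Bruijn lifting of a renaming under `n` extra binders. -/
def liftRen (n : ℕ) (f : ℕ → ℕ) : ℕ → ℕ :=
  fun j => if j < n then j else f (j - n) + n

/-- Terms of the calculus `λ^{□→∧∨}` in de Bruijn representation.
In `box ts s`, the body `s` is under `ts.length` binders: de Bruijn index `j` in `s`
refers to the binding for `ts[ts.length - 1 - j]` (i.e. `x₁` is the outermost binder). -/
inductive Tm : Type where
  | var : ℕ → Tm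
  | lam : Tm → Tm
  | app : Tm → Tm → Tm
  | pair : Tm → Tm → Tm
  | proj1 : Tm → Tm
  | proj2 : Tm → Tm
  | inl : Tm → Tm
  | inr : Tm → Tm
  | case : Tm → Tm → Tm → Tm
  | box : List Tm → Tm → Tm

def Tm.rename (f : ℕ → ℕ) : Tm → Tm
  | .var n => .var (f n)
  | .lam t => .lam (t.rename (liftRen 1 f))
  | .app t s => .app (t.rename f) (s.rename f)
  | .pair t s => .pair (t.rename f) (s.rename f)
  | .proj1 t => .proj1 (t.rename f)
  | .proj2 t => .proj2 (t.rename f)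
  | .inl t => .inl (t.rename f)
  | .inr t => .inr (t.rename f)
  | .case t a b => .case (t.rename f) (a.rename (liftRen 1 f)) (b.rename (liftRen 1 f))
  | .box ts s => .box (ts.attach.map fun x => x.1.rename f) (s.rename (liftRen ts.length f))
termination_by t => sizeOf t
decreasing_by all_goals simp_wf <;> ((try have := List.sizeOf_lt_of_mem x.2); omega)

/-- Compatible (contextual) closure of a base relation `R`. -/
inductive Compat (R : Tm → Tm → Prop) : Tm → Tm → Prop where
  | base {t s} : R t s → Compat R t s
  | lam {t t'} : Compat R t t' → Compat R (.lam t) (.lam t')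
  | appL {t t' s} : Compat R t t' → Compat R (.app t s) (.app t' s)
  | appR {t s s'} : Compat R s s' → Compat R (.app t s) (.app t s')
  | pairL {t t' s} : Compat R t t' → Compat R (.pair t s) (.pair t' s)
  | pairR {t s s'} : Compat R s s' → Compat R (.pair t s) (.pair t s')
  | proj1 {t t'} : Compat R t t' → Compat R (.proj1 t) (.proj1 t')
  | proj2 {t t'} : Compat R t t' → Compat R (.proj2 t) (.proj2 t')
  | inl {t t'} : Compat R t t' → Compat R (.inl t) (.inl t')
  | inr {t t'} : Compat R t t' → Compat R (.inr t) (.inr t')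
  | case1 {t t' a b} : Compat R t t' → Compat R (.case t a b) (.case t' a b)
  | case2 {t a a' b} : Compat R a a' → Compat R (.case t a b) (.case t a' b)
  | case3 {t a b b'} : Compat R b b' → Compat R (.case t a b) (.case t a b')
  | boxArg {t t' l₁ l₂ s} : Compat R t t' →
      Compat R (.box (l₁ ++ t :: l₂) s) (.box (l₁ ++ t' :: l₂) s)
  | boxBody {ts s s'} : Compat R s s' → Compat R (.box ts s) (.box ts s')

/-- Root permutation conversions. -/
inductive PRed : Tm → Tm → Prop where
  | appCase {t a b s} : PRed (.app (.case t a b) s)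
      (.case t (.app a (s.rename (· + 1))) (.app b (s.rename (· + 1))))
  | proj1Case {t a b} : PRed (.proj1 (.case t a b)) (.case t (.proj1 a) (.proj1 b))
  | proj2Case {t a b} : PRed (.proj2 (.case t a b)) (.case t (.proj2 a) (.proj2 b))
  | caseCase {t a b c d} : PRed (.case (.case t a b) c d)
      (.case t (.case a (c.rename (liftRen 1 (· + 1))) (d.rename (liftRen 1 (· + 1))))
               (.case b (c.rename (liftRen 1 (· + 1))) (d.rename (liftRen 1 (· + 1)))))
  | boxCase {l₁ l₂ t a b s} :
      PRed (.box (l₁ ++ (.case t a b) :: l₂) s)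
        (.case t
          (.box ((l₁.map (Tm.rename (· + 1))) ++ a :: (l₂.map (Tm.rename (· + 1))))
                (s.rename (liftRen (l₁.length + 1 + l₂.length) (· + 1))))
          (.box ((l₁.map (Tm.rename (· + 1))) ++ b :: (l₂.map (Tm.rename (· + 1))))
                (s.rename (liftRen (l₁.length + 1 + l₂.length) (· + 1)))))

/-- One-step permutation reduction `>_P`: the compatible closure of the root permutations. -/
def StepP : Tm → Tm → Prop := Compat PRed

/-- The auxiliary measure `#` on terms. -/
def count : Tm → ℕ
  | .var _ => 1
  | .lam _ => 1
  | .app t _ => count t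
  | .pair _ _ => 1
  | .proj1 t => count t
  | .proj2 t => count t
  | .inl _ => 1
  | .inr _ => 1
  | .case t a b => 2 * count t * (count a + count b)
  | .box ts s => count s * (ts.attach.map fun x => count x.1).prod
termination_by t => sizeOf t
decreasing_by all_goals simp_wf <;> ((try have := List.sizeOf_lt_of_mem x.2); omega)

/-- The permutation degree `|·|` on terms. -/
def degree : Tm → ℕ
  | .var _ => 1
  | .lam t => degree t
  | .app t s => degree t + count t * degree s
  | .pair t s => degree t + degree s
  | .proj1 t => degree t + count t
  | .proj2 t => degree t + count t
  | .inl t => degree t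
  | .inr t => degree t
  | .case t a b => degree t + count t * (degree a + degree b)
  | .box ts s =>
      degree s * (ts.attach.map fun x => degree x.1).prod
        + (ts.attach.map fun x => count x.1).prod
termination_by t => sizeOf t
decreasing_by all_goals simp_wf <;> ((try have := List.sizeOf_lt_of_mem x.2); omega)

lemma count_box (ts : List Tm) (s : Tm) :
    count (.box ts s) = count s * (ts.map count).prod := by
  simp [count, List.attach_map_val]

lemma degree_box (ts : List Tm) (s : Tm) :
    degree (.box ts s) = degree s * (ts.map degree).prod + (ts.map count).prod := by
  simp [degree, List.attach_map_val]

lemma rename_box (ts : List Tm) (s : Tm) (f : ℕ → ℕ) :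
    Tm.rename f (.box ts s)
      = .box (ts.attach.map fun x => x.1.rename f) (s.rename (liftRen ts.length f)) := by
  simp [Tm.rename]

lemma count_pos_aux : ∀ n (t : Tm), sizeOf t ≤ n → 0 < count t := by
  intro n
  induction n with
  | zero => intro t h; cases t <;> simp at h
  | succ n ih =>
    intro t h
    cases t with
    | var k => simp [count]
    | lam t => simp [count]
    | app t s => simp only [count]; exact ih t (by simp at h; omega)
    | pair t s => simp [count]
    | proj1 t => simp only [count]; exact ih t (by simp at h; omega)
    | proj2 t => simp only [count]; exact ih t (by simp at h; omega)
    | inl t => simp [count]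
    | inr t => simp [count]
    | case t a b =>
      simp only [count]
      have h1 := ih t (by simp at h; omega)
      have h2 := ih a (by simp at h; omega)
      positivity
    | box ts s =>
      rw [count_box]
      refine Nat.mul_pos (ih s (by simp at h; omega)) (List.prod_pos ?_)
      intro x hx
      obtain ⟨t', ht', rfl⟩ := List.mem_map.1 hx
      exact ih t' (by have := List.sizeOf_lt_of_mem ht'; simp at h; omega)

lemma count_pos (t : Tm) : 0 < count t := count_pos_aux (sizeOf t) t le_rfl
lemma degree_pos_aux : ∀ n (t : Tm), sizeOf t ≤ n → 0 < degree t := by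
  intro n
  induction n with
  | zero => intro t h; cases t <;> simp at h
  | succ n ih =>
    intro t h
    cases t with
    | var k => simp [degree]
    | lam t => simp only [degree]; exact ih t (by simp at h; omega)
    | app t s => simp only [degree]; have := ih t (by simp at h; omega); omega
    | pair t s => simp only [degree]; have := ih t (by simp at h; omega); omega
    | proj1 t => simp only [degree]; have := ih t (by simp at h; omega); omega
    | proj2 t => simp only [degree]; have := ih t (by simp at h; omega); omega
    | inl t => simp only [degree]; exact ih t (by simp at h; omega)
    | inr t => simp only [degree]; exact ih t (by simp at h; omega)
    | case t a b => simp only [degree]; have := ih t (by simp at h; omega); omega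
    | box ts s =>
      rw [degree_box]
      have : 0 < degree s * (ts.map degree).prod := by
        refine Nat.mul_pos (ih s (by simp at h; omega)) (List.prod_pos ?_)
        intro x hx
        obtain ⟨t', ht', rfl⟩ := List.mem_map.1 hx
        exact ih t' (by have := List.sizeOf_lt_of_mem ht'; simp at h; omega)
      omega

lemma degree_pos (t : Tm) : 0 < degree t := degree_pos_aux (sizeOf t) t le_rfl

lemma count_rename_aux : ∀ n (t : Tm) (f : ℕ → ℕ), sizeOf t ≤ n →
    count (t.rename f) = count t := by
  intro n
  induction n with
  | zero => intro t f h; cases t <;> simp at h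
  | succ n ih =>
    intro t f h
    cases t with
    | var k => simp [Tm.rename, count]
    | lam t => simp [Tm.rename, count]
    | app t s => simp only [Tm.rename, count]; exact ih t _ (by simp at h; omega)
    | pair t s => simp [Tm.rename, count]
    | proj1 t => simp only [Tm.rename, count]; exact ih t _ (by simp at h; omega)
    | proj2 t => simp only [Tm.rename, count]; exact ih t _ (by simp at h; omega)
    | inl t => simp [Tm.rename, count]
    | inr t => simp [Tm.rename, count]
    | case t a b =>
      simp only [Tm.rename, count]
      rw [ih t _ (by simp at h; omega), ih a _ (by simp at h; omega),
        ih b _ (by simp at h; omega)]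
    | box ts s =>
      rw [rename_box, count_box, count_box, List.map_map,
        ih s _ (by simp at h; omega)]
      congr 1
      rw [← List.attach_map_val (l := ts) (f := count)]
      refine congrArg List.prod (List.map_congr_left ?_)
      intro a _
      simp only [Function.comp]
      exact ih a.1 _ (by have := List.sizeOf_lt_of_mem a.2; simp at h; omega)
lemma count_rename (t : Tm) (f : ℕ → ℕ) : count (t.rename f) = count t :=
  count_rename_aux (sizeOf t) t f le_rfl

lemma degree_rename_aux : ∀ n (t : Tm) (f : ℕ → ℕ), sizeOf t ≤ n →
    degree (t.rename f) = degree t := by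
  intro n
  induction n with
  | zero => intro t f h; cases t <;> simp at h
  | succ n ih =>
    intro t f h
    cases t with
    | var k => simp [Tm.rename, degree]
    | lam t => simp only [Tm.rename, degree]; exact ih t _ (by simp at h; omega)
    | app t s =>
      simp only [Tm.rename, degree, count_rename]
      rw [ih t _ (by simp at h; omega), ih s _ (by simp at h; omega)]
    | pair t s =>
      simp only [Tm.rename, degree]
      rw [ih t _ (by simp at h; omega), ih s _ (by simp at h; omega)]
    | proj1 t =>
      simp only [Tm.rename, degree, count_rename]
      rw [ih t _ (by simp at h; omega)]
    | proj2 t =>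
      simp only [Tm.rename, degree, count_rename]
      rw [ih t _ (by simp at h; omega)]
    | inl t => simp only [Tm.rename, degree]; exact ih t _ (by simp at h; omega)
    | inr t => simp only [Tm.rename, degree]; exact ih t _ (by simp at h; omega)
    | case t a b =>
      simp only [Tm.rename, degree, count_rename]
      rw [ih t _ (by simp at h; omega), ih a _ (by simp at h; omega),
        ih b _ (by simp at h; omega)]
    | box ts s =>
      rw [rename_box, degree_box, degree_box, List.map_map, List.map_map,
        ih s _ (by simp at h; omega)]
      congr 1
      · congr 1
        rw [← List.attach_map_val (l := ts) (f := degree)]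
        refine congrArg List.prod (List.map_congr_left ?_)
        intro a _
        simp only [Function.comp]
        exact ih a.1 _ (by have := List.sizeOf_lt_of_mem a.2; simp at h; omega)
      · rw [← List.attach_map_val (l := ts) (f := count)]
        refine congrArg List.prod (List.map_congr_left ?_)
        intro a _
        simp only [Function.comp, count_rename]

lemma degree_rename (t : Tm) (f : ℕ → ℕ) : degree (t.rename f) = degree t :=
  degree_rename_aux (sizeOf t) t f le_rfl

lemma map_count_rename (l : List Tm) (f : ℕ → ℕ) :
    (l.map (Tm.rename f)).map count = l.map count := by
  rw [List.map_map]
  exact List.map_congr_left fun a _ => count_rename a f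

lemma map_degree_rename (l : List Tm) (f : ℕ → ℕ) :
    (l.map (Tm.rename f)).map degree = l.map degree := by
  rw [List.map_map]
  exact List.map_congr_left fun a _ => degree_rename a f

lemma count_eq_of_pred {t s : Tm} (h : PRed t s) : count t = count s := by
  cases h with
  | appCase => simp only [count]
  | proj1Case => simp only [count]
  | proj2Case => simp only [count]
  | caseCase => simp only [count, count_rename]; ring
  | boxCase =>
    simp only [count, count_box, List.map_append, List.map_cons, List.prod_append,
      List.prod_cons, map_count_rename, count_rename]
    ring

lemma count_eq_of_step {t s : Tm} (h : StepP t s) : count t = count s := by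
  induction h with
  | base h => exact count_eq_of_pred h
  | lam _ _ => simp [count]
  | appL _ ih => simp only [count]; exact ih
  | appR _ _ => simp only [count]
  | pairL _ _ => simp [count]
  | pairR _ _ => simp [count]
  | proj1 _ ih => simp only [count]; exact ih
  | proj2 _ ih => simp only [count]; exact ih
  | inl _ _ => simp [count]
  | inr _ _ => simp [count]
  | case1 _ ih => simp only [count]; rw [ih]
  | case2 _ ih => simp only [count]; rw [ih]
  | case3 _ ih => simp only [count]; rw [ih]
  | boxArg _ ih =>
    simp only [count_box, List.map_append, List.map_cons, List.prod_append,
      List.prod_cons]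
    rw [ih]
  | boxBody _ ih => simp only [count_box]; rw [ih]
lemma prod_degree_pos (l : List Tm) : 0 < (l.map degree).prod :=
  List.prod_pos fun x hx => by
    obtain ⟨t, _, rfl⟩ := List.mem_map.1 hx; exact degree_pos t

lemma prod_count_pos (l : List Tm) : 0 < (l.map count).prod :=
  List.prod_pos fun x hx => by
    obtain ⟨t, _, rfl⟩ := List.mem_map.1 hx; exact count_pos t

lemma degree_lt_of_pred {t s : Tm} (h : PRed t s) : degree s < degree t := by
  cases h with
  | @appCase t a b s =>
    simp only [degree, count, degree_rename]
    nlinarith [mul_pos (mul_pos (count_pos t) (Nat.add_pos_left (count_pos a) (count b))) (degree_pos s)]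
  | @proj1Case t a b =>
    simp only [degree, count]
    nlinarith [count_pos t, count_pos a, count_pos b]
  | @proj2Case t a b =>
    simp only [degree, count]
    nlinarith [count_pos t, count_pos a, count_pos b]
  | @caseCase t a b c d =>
    simp only [degree, count, degree_rename, count_rename]
    nlinarith [mul_pos (mul_pos (count_pos t) (Nat.add_pos_left (count_pos a) (count b))) (Nat.add_pos_left (degree_pos c) (degree d))]
  | @boxCase l₁ l₂ t a b s =>
    simp only [degree, count, degree_box, count_box, List.map_append, List.map_cons,
      List.prod_append, List.prod_cons, map_count_rename, map_degree_rename,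
      degree_rename, count_rename]
    have h1 := degree_pos s
    have h2 := prod_degree_pos l₁
    have h3 := prod_degree_pos l₂
    have h4 := prod_count_pos l₁
    have h5 := prod_count_pos l₂
    have h6 := degree_pos t
    have h7 := count_pos t
    have h8 := count_pos a
    have h9 := count_pos b
    nlinarith [mul_pos (mul_pos h1 h2) h3, mul_pos h4 h5,
      mul_pos (mul_pos h7 (Nat.add_pos_left h8 (count b))) (mul_pos h4 h5),
      mul_pos (mul_pos (mul_pos h1 h2) h3) h6]

/-- **Decrease of the permutation degree under permutation**: if `t >_P s` then `|t| > |s|`. -/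
theorem degree_decreases_of_perm : ∀ t s : Tm, StepP t s → degree t > degree s := by
  intro t s h
  induction h with
  | base h => exact degree_lt_of_pred h
  | lam _ ih => simpa only [degree] using ih
  | @appL t t' s h ih =>
    simp only [degree]; rw [count_eq_of_step h]; omega
  | @appR t s s' h ih =>
    simp only [degree]
    have := count_pos t
    nlinarith
  | pairL _ ih => simp only [degree]; omega
  | inl _ ih => simpa only [degree] using ih
  | inr _ ih => simpa only [degree] using ih
  | pairR _ ih => simp only [degree]; omega
  | @proj1 t t' h ih => simp only [degree]; rw [count_eq_of_step h]; omega
  | @proj2 t t' h ih => simp only [degree]; rw [count_eq_of_step h]; omega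
  | @case1 t t' a b h ih =>
    simp only [degree]; rw [count_eq_of_step h]; omega
  | @case2 t a a' b h ih =>
    simp only [degree]
    have := count_pos t
    nlinarith
  | @case3 t a b b' h ih =>
    simp only [degree]
    have := count_pos t
    nlinarith
  | @boxArg t t' l₁ l₂ s h ih =>
    simp only [degree_box, List.map_append, List.map_cons, List.prod_append,
      List.prod_cons]
    rw [count_eq_of_step h]
    have h1 := degree_pos s
    have h2 := prod_degree_pos l₁
    have h3 := prod_degree_pos l₂
    nlinarith [mul_pos (mul_pos h1 h2) h3]
  | @boxBody ts s s' h ih =>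
    simp only [degree_box]
    have := prod_degree_pos ts
    nlinarith

end IEL
end
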